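/- Let q be a power of a prime p and let F be a field of characteristic p containing 𝔽_q, complete with respect to a nonarchimedean absolute value |·|. Let d ≥ 1 and let Δ₁ ∈ M_d(F) with ‖Δ₁‖ < 1. Then there exists a sequence Φ : ℕ → M_d(F) with Φ₀ = Id, satisfying Φ_n = Φ_n^{[q]} + Δ₁·Φ_{n−1}^{[q]} for all n ≥ 1, and with ‖Φ_n‖ ≤ ‖Δ₁‖^{(qⁿ−1)/(q−1)} for all n ≥ 0; in particular ‖Φ_n‖ → 0 as n → ∞. -/

import Mathlib

/-- The supremum norm of a matrix: the maximum of the norms of its entries. -/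
noncomputable def matNorm {ι κ : Type*} [Fintype ι] [Fintype κ] {F : Type*} [Norm F]
    (M : Matrix ι κ F) : ℝ :=
  ⨆ i, ⨆ j, ‖M i j‖

/-!
For `‖a‖ < 1` the series `x(a) = ∑ₘ a^{qᵐ}` converges, satisfies `x = x^q + a` because `x ↦ x^q`
is a continuous additive map in characteristic `p`, and has `‖x(a)‖ ≤ ‖a‖` by the ultrametric
inequality.
Setting `Φₖ₊₁ = x(Δ₁ Φₖ^{[q]})` entrywise, the ultrametric bound `‖Δ₁ Φₖ^{[q]}‖ ≤ ‖Δ₁‖ ‖Φₖ‖^q` gives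
`‖Φₖ‖ ≤ ‖Δ₁‖^{1 + q + ⋯ + q^{k-1}}`, and `1 + q + ⋯ + q^{k-1} = (q^k - 1)/(q - 1)`.
-/

open Finset

section MatNorm

variable {ι κ : Type*} [Fintype ι] [Fintype κ]

theorem norm_le_matNorm {E : Type*} [SeminormedAddCommGroup E] (M : Matrix ι κ E) (i : ι)
    (j : κ) :
    ‖M i j‖ ≤ matNorm M :=
  (le_ciSup (Set.finite_range _).bddAbove j).trans
    (le_ciSup (f := fun i => ⨆ j, ‖M i j‖) (Set.finite_range _).bddAbove i)

theorem matNorm_nonneg {E : Type*} [SeminormedAddCommGroup E] (M : Matrix ι κ E) :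
    0 ≤ matNorm M :=
  Real.iSup_nonneg fun _ => Real.iSup_nonneg fun _ => norm_nonneg _

theorem matNorm_le {E : Type*} [SeminormedAddCommGroup E] {M : Matrix ι κ E} {t : ℝ}
    (ht : 0 ≤ t) (h : ∀ i j, ‖M i j‖ ≤ t) : matNorm M ≤ t :=
  Real.iSup_le (fun i => Real.iSup_le (h i) ht) ht

theorem matNorm_one_le {R : Type*} [NormedRing R] [NormOneClass R] [DecidableEq ι] :
    matNorm (1 : Matrix ι ι R) ≤ 1 :=
  matNorm_le zero_le_one fun i j => by
    rcases eq_or_ne i j with rfl | hij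
    · simp
    · simp [Matrix.one_apply_ne hij]

theorem matNorm_mul_le {ν : Type*} [Fintype ν] {R : Type*} [NormedRing R] [IsUltrametricDist R]
    (A : Matrix ι κ R) (B : Matrix κ ν R) : matNorm (A * B) ≤ matNorm A * matNorm B :=
  matNorm_le (mul_nonneg (matNorm_nonneg A) (matNorm_nonneg B)) fun i j =>
    IsUltrametricDist.norm_sum_le_of_forall_le_of_nonneg
      (mul_nonneg (matNorm_nonneg A) (matNorm_nonneg B)) fun l _ =>
        (norm_mul_le _ _).trans <| mul_le_mul (norm_le_matNorm A i l) (norm_le_matNorm B l j)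
          (norm_nonneg _) (matNorm_nonneg A)

theorem matNorm_map_pow_le {K : Type*} [NormedDivisionRing K] (M : Matrix ι κ K) (q : ℕ) :
    matNorm (M.map (· ^ q)) ≤ matNorm M ^ q :=
  matNorm_le (pow_nonneg (matNorm_nonneg M) q) fun i j => by
    simpa only [Matrix.map_apply, norm_pow] using
      pow_le_pow_left₀ (norm_nonneg _) (norm_le_matNorm M i j) q

theorem matNorm_mul_map_pow_le {K : Type*} [NormedDivisionRing K] [IsUltrametricDist K]
    {ν : Type*} [Fintype ν] (A : Matrix ι κ K) (M : Matrix κ ν K) (q : ℕ) :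
    matNorm (A * M.map (· ^ q)) ≤ matNorm A * matNorm M ^ q :=
  (matNorm_mul_le _ _).trans <|
    mul_le_mul_of_nonneg_left (matNorm_map_pow_le M q) (matNorm_nonneg A)

end MatNorm

section ArtinSchreier

variable {F : Type*} [NormedField F]

theorem summable_pow_pow [CompleteSpace F] {q : ℕ} (hq : 1 < q) {a : F} (ha : ‖a‖ < 1) :
    Summable fun m : ℕ => a ^ q ^ m :=
  .of_norm <| .of_nonneg_of_le (fun _ => norm_nonneg _)
    (fun m => by
      simpa only [norm_pow] using
        pow_le_pow_of_le_one (norm_nonneg a) ha.le (Nat.lt_pow_self hq).le)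
    (summable_geometric_of_lt_one (norm_nonneg a) ha)

noncomputable def artinSchreierRoot (q : ℕ) (a : F) : F :=
  ∑' m : ℕ, a ^ q ^ m

theorem norm_artinSchreierRoot_le [IsUltrametricDist F] {q : ℕ} (hq : 0 < q) {a : F}
    (ha : ‖a‖ ≤ 1) : ‖artinSchreierRoot q a‖ ≤ ‖a‖ :=
  IsUltrametricDist.norm_tsum_le_of_forall_le_of_nonneg (norm_nonneg a) fun m => by
    simpa only [norm_pow, pow_one] using
      pow_le_pow_of_le_one (norm_nonneg a) ha (Nat.one_le_pow m q hq)

theorem artinSchreierRoot_eq [CompleteSpace F] (p n : ℕ) [ExpChar F p] (hq : 1 < p ^ n) {a : F}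
    (ha : ‖a‖ < 1) :
    artinSchreierRoot (p ^ n) a = artinSchreierRoot (p ^ n) a ^ p ^ n + a := by
  have hs := summable_pow_pow hq ha
  have hfrob :
      HasSum (fun m : ℕ => a ^ (p ^ n) ^ (m + 1)) (artinSchreierRoot (p ^ n) a ^ p ^ n) := by
    convert hs.hasSum.map (iterateFrobenius F p n) (continuous_pow _) using 1
    · funext m
      rw [Function.comp_apply, iterateFrobenius_def, pow_succ, pow_mul]
    · rfl
  conv_lhs => rw [artinSchreierRoot, hs.tsum_eq_zero_add, hfrob.tsum_eq]
  rw [pow_zero, pow_one, add_comm]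

variable {ι κ : Type*} [Fintype ι] [Fintype κ]

theorem matNorm_map_artinSchreierRoot_le [IsUltrametricDist F] {q : ℕ} (hq : 0 < q)
    {A : Matrix ι κ F} (hA : matNorm A ≤ 1) :
    matNorm (A.map (artinSchreierRoot q)) ≤ matNorm A :=
  matNorm_le (matNorm_nonneg A) fun i j =>
    (norm_artinSchreierRoot_le hq ((norm_le_matNorm A i j).trans hA)).trans (norm_le_matNorm A i j)

theorem map_artinSchreierRoot_eq [CompleteSpace F] (p n : ℕ) [ExpChar F p] (hq : 1 < p ^ n)
    {A : Matrix ι κ F} (hA : matNorm A < 1) :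
    A.map (artinSchreierRoot (p ^ n)) =
      (A.map (artinSchreierRoot (p ^ n))).map (· ^ p ^ n) + A := by
  ext i j
  exact artinSchreierRoot_eq p n hq ((norm_le_matNorm A i j).trans_lt hA)

end ArtinSchreier

section FrobeniusSeq

variable {F : Type*} [NormedField F] {ι : Type*} [Fintype ι] [DecidableEq ι]

noncomputable def frobeniusSeq (q : ℕ) (Δ : Matrix ι ι F) : ℕ → Matrix ι ι F
  | 0 => 1
  | k + 1 => (Δ * (frobeniusSeq q Δ k).map (· ^ q)).map (artinSchreierRoot q)

theorem matNorm_frobeniusSeq_le [IsUltrametricDist F] {q : ℕ} (hq : 0 < q) {Δ : Matrix ι ι F}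
    (hΔ : matNorm Δ ≤ 1) (k : ℕ) :
    matNorm (frobeniusSeq q Δ k) ≤ matNorm Δ ^ ∑ i ∈ range k, q ^ i := by
  induction k with
  | zero => simpa [frobeniusSeq] using matNorm_one_le
  | succ k ih =>
    have hA : matNorm (Δ * (frobeniusSeq q Δ k).map (· ^ q)) ≤
        matNorm Δ ^ ∑ i ∈ range (k + 1), q ^ i :=
      calc _ ≤ matNorm Δ * matNorm (frobeniusSeq q Δ k) ^ q := matNorm_mul_map_pow_le _ _ q
        _ ≤ matNorm Δ * (matNorm Δ ^ ∑ i ∈ range k, q ^ i) ^ q :=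
            mul_le_mul_of_nonneg_left (pow_le_pow_left₀ (matNorm_nonneg _) ih q) (matNorm_nonneg Δ)
        _ = matNorm Δ ^ ∑ i ∈ range (k + 1), q ^ i := by
            rw [sum_range_succ', ← pow_mul, sum_mul, pow_add, pow_zero, pow_one, mul_comm]
            simp only [← pow_succ]
    exact (matNorm_map_artinSchreierRoot_le hq
      (hA.trans (pow_le_one₀ (matNorm_nonneg Δ) hΔ))).trans hA

theorem frobeniusSeq_succ [IsUltrametricDist F] [CompleteSpace F] (p n : ℕ) [ExpChar F p]
    (hq : 1 < p ^ n) {Δ : Matrix ι ι F} (hΔ : matNorm Δ < 1) (k : ℕ) :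
    frobeniusSeq (p ^ n) Δ (k + 1) =
      (frobeniusSeq (p ^ n) Δ (k + 1)).map (· ^ p ^ n) +
        Δ * (frobeniusSeq (p ^ n) Δ k).map (· ^ p ^ n) := by
  have hr := matNorm_nonneg Δ
  have hΦ : matNorm (frobeniusSeq (p ^ n) Δ k) ≤ 1 :=
    (matNorm_frobeniusSeq_le (q := p ^ n) (by omega) hΔ.le k).trans (pow_le_one₀ hr hΔ.le)
  have hA : matNorm (Δ * (frobeniusSeq (p ^ n) Δ k).map (· ^ p ^ n)) < 1 :=
    calc _ ≤ matNorm Δ * matNorm (frobeniusSeq (p ^ n) Δ k) ^ p ^ n :=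
          matNorm_mul_map_pow_le _ _ _
      _ ≤ matNorm Δ := mul_le_of_le_one_right hr (pow_le_one₀ (matNorm_nonneg _) hΦ)
      _ < 1 := hΔ
  rw [frobeniusSeq]
  exact map_artinSchreierRoot_eq p n hq hA

end FrobeniusSeq

theorem le_sum_range_pow {q : ℕ} (hq : 0 < q) (k : ℕ) : k ≤ ∑ i ∈ range k, q ^ i :=
  calc k = ∑ _i ∈ range k, 1 := by simp
    _ ≤ ∑ i ∈ range k, q ^ i := sum_le_sum fun i _ => Nat.one_le_pow i q hq

theorem statement15_general
    (p n q : ℕ) [Fact p.Prime] (hn : n ≠ 0) (hq : q = p ^ n)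
    (F : Type) [NormedField F] [IsUltrametricDist F] [CompleteSpace F] [CharP F p]
    (d : ℕ)
    (Δ₁ : Matrix (Fin d) (Fin d) F) (hΔ : matNorm Δ₁ < 1) :
    ∃ Φ : ℕ → Matrix (Fin d) (Fin d) F, Φ 0 = 1 ∧
      (∀ k : ℕ, Φ (k + 1) = (Φ (k + 1)).map (· ^ q) + Δ₁ * (Φ k).map (· ^ q)) ∧
      (∀ k : ℕ, matNorm (Φ k) ≤ (matNorm Δ₁) ^ ((((q : ℝ) ^ k) - 1) / ((q : ℝ) - 1))) ∧
      Filter.Tendsto (fun k => matNorm (Φ k)) Filter.atTop (nhds 0) := by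
  subst hq
  have hq : 1 < p ^ n := Nat.one_lt_pow hn (Fact.out : p.Prime).one_lt
  have hr := matNorm_nonneg Δ₁
  have hbound := matNorm_frobeniusSeq_le (q := p ^ n) (by omega) hΔ.le
  refine ⟨frobeniusSeq (p ^ n) Δ₁, rfl, frobeniusSeq_succ p n hq hΔ, fun k => ?_, ?_⟩
  · have hexp : (((p ^ n : ℕ) : ℝ) ^ k - 1) / ((p ^ n : ℕ) - 1) =
        ((∑ i ∈ range k, (p ^ n) ^ i : ℕ) : ℝ) := by
      push_cast
      exact (geom_sum_eq (by exact_mod_cast hq.ne') k).symm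
    rw [hexp, Real.rpow_natCast]
    exact hbound k
  · exact squeeze_zero (fun k => matNorm_nonneg _)
      (fun k => (hbound k).trans (pow_le_pow_of_le_one hr hΔ.le (le_sum_range_pow (by omega) k)))
      (tendsto_pow_atTop_nhds_zero_of_lt_one hr hΔ)

/-- Let `q = pⁿ` and let `F ⊇ 𝔽_q` be a field of characteristic `p`, complete
with respect to a nonarchimedean absolute value.  Let `Δ₁ ∈ M_d(F)` with `‖Δ₁‖ < 1`.  Then
there is a sequence `Φ : ℕ → M_d(F)` with `Φ₀ = Id`, satisfying
`Φ_k = Φ_k^{[q]} + Δ₁ Φ_{k-1}^{[q]}` for all `k ≥ 1`, and with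
`‖Φ_k‖ ≤ ‖Δ₁‖^{(q^k-1)/(q-1)}` for all `k`; in particular `‖Φ_k‖ → 0`. -/
theorem statement15
    (p n q : ℕ) [Fact p.Prime] (hn : n ≠ 0) (hq : q = p ^ n)
    (F : Type) [NormedField F] [IsUltrametricDist F] [CompleteSpace F] [CharP F p]
    (φ : GaloisField p n →+* F)
    (d : ℕ) (hd : 1 ≤ d)
    (Δ₁ : Matrix (Fin d) (Fin d) F) (hΔ : matNorm Δ₁ < 1) :
    ∃ Φ : ℕ → Matrix (Fin d) (Fin d) F, Φ 0 = 1 ∧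
      (∀ k : ℕ, Φ (k + 1) = (Φ (k + 1)).map (· ^ q) + Δ₁ * (Φ k).map (· ^ q)) ∧
      (∀ k : ℕ, matNorm (Φ k) ≤ (matNorm Δ₁) ^ ((((q : ℝ) ^ k) - 1) / ((q : ℝ) - 1))) ∧
      Filter.Tendsto (fun k => matNorm (Φ k)) Filter.atTop (nhds 0) :=
  statement15_general p n q hn hq F d Δ₁ hΔ
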